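/- Let R be a commutative noetherian local ring and E, M finitely generated R-modules with M ≅ Hom_R(E, M) and E faithful. Then for every 𝔭 ∈ Ass_R M, the localization E_𝔭 is a free R_𝔭-module of rank 1 (i.e., E_𝔭 ≅ R_𝔭). -/

import Mathlib

open CategoryTheory IsLocalRing

noncomputable section

/-- The `n`-th Ext module `Ext_Q^n(M, N)` as an object of `ModuleCat Q`. -/
abbrev extMod (Q : Type) [CommRing Q] (n : ℕ)
    (M N : Type) [AddCommGroup M] [Module Q M] [AddCommGroup N] [Module Q N] : ModuleCat Q :=
  ((Ext Q (ModuleCat Q) n).obj (Opposite.op (ModuleCat.of Q M))).obj (ModuleCat.of Q N)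

/-- The `n`-th Tor module `Tor_n^Q(M, N)` as an object of `ModuleCat Q`. -/
abbrev torMod (Q : Type) [CommRing Q] (n : ℕ)
    (M N : Type) [AddCommGroup M] [Module Q M] [AddCommGroup N] [Module Q N] : ModuleCat Q :=
  ((Tor (ModuleCat Q) n).obj (ModuleCat.of Q M)).obj (ModuleCat.of Q N)

/-- The depth of a module over a local ring: the infimum of `n` with `Ext^n(k, M) ≠ 0`. -/
noncomputable def rdepth (R : Type) [CommRing R] [IsLocalRing R]
    (M : Type) [AddCommGroup M] [Module R M] : ℕ∞ :=
  sInf ((fun n : ℕ => (n : ℕ∞)) '' {n : ℕ | Nontrivial (extMod R n (ResidueField R) M)})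

/-- The Krull dimension of a module, as the dimension of `R / Ann M`. -/
noncomputable def moduleKrullDim (R : Type) [CommRing R]
    (M : Type) [AddCommGroup M] [Module R M] : WithBot (WithTop ℕ) :=
  ringKrullDim (R ⧸ Module.annihilator R M)

/-- A noetherian local ring is regular if its maximal ideal is generated by
`dim R` many elements. -/
def IsRegularLocal (Q : Type) [CommRing Q] [IsLocalRing Q] : Prop :=
  IsNoetherianRing Q ∧ ∃ s : Finset Q, Ideal.span (s : Set Q) = maximalIdeal Q ∧
    ((s.card : WithTop ℕ) : WithBot (WithTop ℕ)) = ringKrullDim Q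

/-- The projective dimension of a module, via vanishing of Ext. -/
noncomputable def projDim (Q : Type) [CommRing Q]
    (M : Type) [AddCommGroup M] [Module Q M] : ℕ∞ :=
  sInf {n : ℕ∞ | ∀ (N : ModuleCat Q) (k : ℕ), n < (k : ℕ∞) →
    Subsingleton (((Ext Q (ModuleCat Q) k).obj (Opposite.op (ModuleCat.of Q M))).obj N)}

/-- A local ring is Cohen–Macaulay if its depth equals its Krull dimension. -/
def IsCohenMacaulayLocal (R : Type) [CommRing R] [IsLocalRing R] : Prop :=
  WithBot.some (rdepth R R) = ringKrullDim R

/-- A local ring is Gorenstein if it has finite injective dimension over itself. -/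
def IsGorensteinLocal (R : Type) [CommRing R] [IsLocalRing R] : Prop :=
  ∃ n : ℕ, ∀ (N : ModuleCat R) (k : ℕ), n < k →
    Subsingleton (((Ext R (ModuleCat R) k).obj (Opposite.op N)).obj (ModuleCat.of R R))

end

/-!
Localizing at `𝔭` keeps `E` finite and faithful, turns the isomorphism into
`M_𝔭 ≅ Hom(E_𝔭, M_𝔭)` (as `E` is finitely presented) and makes the maximal ideal an associated
prime of `M_𝔭`. So it suffices to treat a noetherian local ring with `𝔪 ∈ Ass M`. Taking the
`𝔪`-torsion `T ≠ 0` on both sides gives `T ≅ Hom_R(E, T) ≅ Hom_k(k ⊗ E, T)`, whence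
`dim_k (k ⊗ E) = 1`. By Nakayama `E` is cyclic, and a faithful cyclic module is free of rank one.
-/

open Submodule Module TensorProduct

namespace Submodule

variable {R X Y Z : Type*} [CommRing R] [AddCommGroup X] [Module R X] [AddCommGroup Y]
  [Module R Y] [AddCommGroup Z] [Module R Z]

lemma map_torsionBySet_linearEquiv (e : Y ≃ₗ[R] Z) (s : Set R) :
    (torsionBySet R Y s).map (e : Y →ₗ[R] Z) = torsionBySet R Z s := by
  ext z
  simp [Submodule.map_equiv_eq_comap_symm, mem_torsionBySet_iff, ← map_smul]

def torsionBySetLinearMapEquiv (s : Set R) :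
    torsionBySet R (X →ₗ[R] Y) s ≃ₗ[R] (X →ₗ[R] torsionBySet R Y s) where
  toFun f := f.1.codRestrict _ fun x => (mem_torsionBySet_iff _ _).2 fun a => by
    rw [← LinearMap.smul_apply, (mem_torsionBySet_iff _ _).1 f.2 a, LinearMap.zero_apply]
  invFun g := ⟨(torsionBySet R Y s).subtype ∘ₗ g, (mem_torsionBySet_iff _ _).2 fun a => by
    ext x; simpa using (mem_torsionBySet_iff _ _).1 (g x).2 a⟩
  map_add' _ _ := rfl
  map_smul' _ _ := rfl
  left_inv _ := rfl
  right_inv _ := rfl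

lemma nontrivial_torsionBySet_of_mem_associatedPrimes [IsNoetherianRing R] {I : Ideal R}
    (hI : I ∈ associatedPrimes R Y) : Nontrivial (torsionBySet R Y I) := by
  obtain ⟨hprime, y, rfl⟩ := isAssociatedPrime_iff.1 hI
  have hy : y ≠ 0 := by
    rintro rfl
    exact hprime.ne_top (by simp)
  refine ⟨⟨⟨y, (mem_torsionBySet_iff _ _).2 fun a => ?_⟩, 0, fun h => hy congr($h.1)⟩⟩
  simpa using mem_colon_singleton.1 a.2

end Submodule

lemma Module.nonempty_linearEquiv_self_of_isPrincipal_top {R X : Type*} [CommRing R]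
    [AddCommGroup X] [Module R X] (hX : annihilator R X = ⊥)
    (hcyc : (⊤ : Submodule R X).IsPrincipal) : Nonempty (X ≃ₗ[R] R) := by
  obtain ⟨x, hx⟩ := hcyc
  have hinj : Function.Injective (LinearMap.toSpanSingleton R X x) := by
    rw [← LinearMap.ker_eq_bot]
    change Ideal.torsionOf R X x = ⊥
    rw [← Ideal.annihilator_span_singleton_eq_torsionOf, ← hx, annihilator_top, hX]
  have hsurj : Function.Surjective (LinearMap.toSpanSingleton R X x) := by
    rw [← LinearMap.range_eq_top, ← LinearMap.span_singleton_eq_range, hx]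
  exact ⟨(LinearEquiv.ofBijective _ ⟨hinj, hsurj⟩).symm⟩

namespace IsLocalRing

variable {R X Y : Type*} [CommRing R] [IsLocalRing R] [AddCommGroup X] [Module R X]
  [Module.Finite R X] [AddCommGroup Y] [Module R Y]

lemma isPrincipal_top_of_finrank_eq_one
    (h : finrank (ResidueField R) (ResidueField R ⊗[R] X) = 1) :
    (⊤ : Submodule R X).IsPrincipal := by
  let b := finBasisOfFinrankEq _ _ h
  obtain ⟨x, hx⟩ := TensorProduct.mk_surjective R X _ residue_surjective (b 0)
  have hspan := span_eq_top_of_tmul_eq_basis (fun _ : Fin 1 => x) b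
    fun i => by rw [Subsingleton.elim i 0, ← hx]; rfl
  rw [Set.range_const] at hspan
  exact ⟨x, hspan.symm⟩

lemma finrank_residueField_tensorProduct_eq_one [IsNoetherianRing R] [Module.Finite R Y]
    (e : Y ≃ₗ[R] (X →ₗ[R] Y)) [Nontrivial (torsionBySet R Y (maximalIdeal R))] :
    finrank (ResidueField R) (ResidueField R ⊗[R] X) = 1 := by
  let T := torsionBySet R Y (maximalIdeal R)
  -- `ResidueField R` is a type synonym of `R ⧸ 𝔪`, so its action on `T` is not found by itself.
  let : Module (ResidueField R) T := (inferInstance : Module (R ⧸ maximalIdeal R) T)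
  have : IsScalarTower R (ResidueField R) T :=
    (inferInstance : IsScalarTower R (R ⧸ maximalIdeal R) T)
  have : Module.Finite R T := Module.Finite.iff_fg.2 (IsNoetherian.noetherian T)
  have : Module.Finite (ResidueField R) T := .of_restrictScalars_finite R _ _
  let eT : T ≃ₗ[R] (X →ₗ[R] T) :=
    (e.ofSubmodules _ _ (map_torsionBySet_linearEquiv e _)).trans
      (torsionBySetLinearMapEquiv _)
  have hT := ((eT.extendScalarsOfSurjective residue_surjective).trans
    (LinearMap.liftBaseChangeEquiv (ResidueField R))).finrank_eq
  rw [finrank_linearMap] at hT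
  exact (mul_eq_right₀ finrank_pos.ne').1 hT.symm

lemma nonempty_linearEquiv_self_of_linearEquiv_linearMap [IsNoetherianRing R]
    [Module.Finite R Y] (hX : annihilator R X = ⊥) (e : Y ≃ₗ[R] (X →ₗ[R] Y))
    (hY : maximalIdeal R ∈ associatedPrimes R Y) : Nonempty (X ≃ₗ[R] R) :=
  have := nontrivial_torsionBySet_of_mem_associatedPrimes hY
  nonempty_linearEquiv_self_of_isPrincipal_top hX
    (isPrincipal_top_of_finrank_eq_one (finrank_residueField_tensorProduct_eq_one e))

end IsLocalRing

lemma IsLocalizedModule.annihilator_eq_bot {R A M M' : Type*} [CommRing R] (S : Submonoid R)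
    [CommRing A] [Algebra R A] [IsLocalization S A] [AddCommGroup M] [Module R M]
    [Module.Finite R M] [AddCommGroup M'] [Module R M'] [Module A M'] [IsScalarTower R A M']
    (f : M →ₗ[R] M') [IsLocalizedModule S f] (h : annihilator R M = ⊥) :
    annihilator A M' = ⊥ := by
  refine eq_bot_iff.2 fun a ha => ?_
  obtain ⟨r, s, rfl⟩ := IsLocalization.exists_mk'_eq S a
  -- `r • f m = s • (r / s) • f m = 0`
  have hr : f ∘ₗ (r • LinearMap.id (R := R) (M := M)) = f ∘ₗ 0 := by
    ext m
    rw [LinearMap.comp_apply, LinearMap.smul_apply, LinearMap.id_apply, map_smul,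
      ← algebraMap_smul A, ← IsLocalization.mk'_spec' A r s, mul_smul,
      Module.mem_annihilator.1 ha, smul_zero, LinearMap.comp_zero, LinearMap.zero_apply]
  obtain ⟨t, ht⟩ := Module.Finite.exists_smul_of_comp_eq_of_isLocalizedModule S f _ _ hr
  have htr : (t : R) * r ∈ annihilator R M := Module.mem_annihilator.2 fun m => by
    simpa [mul_smul, Submonoid.smul_def] using LinearMap.congr_fun ht m
  rw [h, Ideal.mem_bot] at htr
  exact (IsLocalization.mk'_eq_zero_iff r s).2 ⟨t, htr⟩

noncomputable def Module.FinitePresentation.linearEquivMapLocalization {R M N : Type*}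
    [CommRing R] (S : Submonoid R) [AddCommGroup M] [Module R M] [Module.FinitePresentation R M]
    [AddCommGroup N] [Module R N] :
    LocalizedModule S (M →ₗ[R] N) ≃ₗ[Localization S]
      (LocalizedModule S M →ₗ[Localization S] LocalizedModule S N) :=
  (Module.FinitePresentation.linearEquivMapExtendScalars S).extendScalarsOfIsLocalization S _

theorem stmt_17_general (R : Type) [CommRing R] [IsNoetherianRing R]
    (E M : Type) [AddCommGroup E] [Module R E] [Module.Finite R E]
    [AddCommGroup M] [Module R M] [Module.Finite R M]
    (hfaith : Module.annihilator R E = ⊥)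
    (e : Nonempty (M ≃ₗ[R] (E →ₗ[R] M)))
    (p : Ideal R) [p.IsPrime] (hp : p ∈ associatedPrimes R M) :
    Nonempty ((LocalizedModule p.primeCompl E) ≃ₗ[Localization.AtPrime p]
      Localization.AtPrime p) := by
  obtain ⟨e⟩ := e
  have : Module.FinitePresentation R E := Module.finitePresentation_of_finite R E
  let eLoc : LocalizedModule p.primeCompl M ≃ₗ[Localization.AtPrime p]
      (LocalizedModule p.primeCompl E →ₗ[Localization.AtPrime p] LocalizedModule p.primeCompl M) :=
    (IsLocalizedModule.mapEquiv p.primeCompl (LocalizedModule.mkLinearMap _ M)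
      (LocalizedModule.mkLinearMap _ _) _ e).trans
      (Module.FinitePresentation.linearEquivMapLocalization p.primeCompl)
  exact IsLocalRing.nonempty_linearEquiv_self_of_linearEquiv_linearMap
    (IsLocalizedModule.annihilator_eq_bot p.primeCompl
      (LocalizedModule.mkLinearMap p.primeCompl E) hfaith)
    eLoc (Module.associatedPrimes.mem_associatedPrimes_atPrime_of_mem_associatedPrimes hp)

/-- if M ≅ Hom_R(E, M) with E faithful, then E_𝔭 ≅ R_𝔭 for every
𝔭 ∈ Ass_R M. -/
theorem stmt_17 (R : Type) [CommRing R] [IsLocalRing R] [IsNoetherianRing R]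
    (E M : Type) [AddCommGroup E] [Module R E] [Module.Finite R E]
    [AddCommGroup M] [Module R M] [Module.Finite R M]
    (hfaith : Module.annihilator R E = ⊥)
    (e : Nonempty (M ≃ₗ[R] (E →ₗ[R] M)))
    (p : Ideal R) [p.IsPrime] (hp : p ∈ associatedPrimes R M) :
    Nonempty ((LocalizedModule p.primeCompl E) ≃ₗ[Localization.AtPrime p]
      Localization.AtPrime p) :=
  stmt_17_general R E M hfaith e p hp
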